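/- Let T ≥ 2 and define f̄_m(x,z) = -Ψ(1)Φ(x₁) + Σ_{i=2}^{T}[Ψ(-z_i)Φ(-x_i) - Ψ(z_i)Φ(x_i)] + 6·Σ_{i=1}^{T-1}(x_i - (1/2)·z_{i+1})² for x ∈ ℝ^T and z = (z₂,…,z_T) ∈ ℝ^{T-1}. If there exists an index i with 2 ≤ i ≤ T and |z_i| < 1, then the Euclidean norm of the full gradient of f̄_m at (x,z) (with respect to all 2T-1 variables) satisfies ‖∇f̄_m(x,z)‖₂ > 1/3. -/

import Mathlib

/-!
Let `i` be the first index with `|z_i| < 1` and `a = x_{i-1} - z_i / 2`. Since `Ψ` is monotone and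
`Φ ≥ 0`, the `z_i`-partial of `f̄_m` is at most `-6a`. The coefficient of `-Φ'(x_{i-1})` in the
`x_{i-1}`-partial is `Ψ(1) = 1` if `i = 2` and `Ψ(-z_{i-1}) + Ψ(z_{i-1}) ≥ 1` otherwise, so that
partial is at most `-Φ'(x_{i-1}) + 12a`. If both partials had absolute value at most `1/3`, then
`-1/36 ≤ a ≤ 1/18`, hence `|x_{i-1}| < 1` and `Φ'(x_{i-1}) = √e e^{-x_{i-1}²/2} > 1`, which forces
`a > 1/18`.
-/

/-- `Ψ(x) = 0` for `x ≤ 1/2`, `exp(1 - 1/(2x-1)²)` for `x > 1/2`. -/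
noncomputable def Psi (x : ℝ) : ℝ :=
  if x ≤ 1 / 2 then 0 else Real.exp (1 - 1 / (2 * x - 1) ^ 2)

/-- `Φ(x) = √e · ∫_{-∞}^x e^{-t²/2} dt`. -/
noncomputable def Phi (x : ℝ) : ℝ :=
  Real.sqrt (Real.exp 1) * ∫ t in Set.Iic x, Real.exp (-t ^ 2 / 2)

/-- `f̄_m(x, z)` on the Euclidean space `ℝ^T × ℝ^{T-1}` (so that gradients and norms
are with respect to the Euclidean structure on all `2T - 1` variables).
Coordinate `Sum.inl j` is the math variable `x_{j+1}`; `Sum.inr j` is `z_{j+2}`. -/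
noncomputable def fmE (T : ℕ) (hT : 2 ≤ T)
    (w : EuclideanSpace ℝ (Fin T ⊕ Fin (T - 1))) : ℝ :=
  -Psi 1 * Phi (w (Sum.inl ⟨0, by omega⟩))
    + ∑ j : Fin (T - 1),
        (Psi (-w (Sum.inr j)) * Phi (-w (Sum.inl ⟨(j : ℕ) + 1, by have := j.isLt; omega⟩))
          - Psi (w (Sum.inr j)) * Phi (w (Sum.inl ⟨(j : ℕ) + 1, by have := j.isLt; omega⟩)))
    + 6 * ∑ j : Fin (T - 1),
        (w (Sum.inl ⟨(j : ℕ), by have := j.isLt; omega⟩) - (1 / 2) * w (Sum.inr j)) ^ 2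

section

open Real MeasureTheory Sum

theorem Psi_nonneg (x : ℝ) : 0 ≤ Psi x := by
  unfold Psi; split_ifs <;> positivity

theorem monotone_Psi : Monotone Psi := by
  intro x y hxy
  unfold Psi
  split_ifs with hx hy hy
  · rfl
  · positivity
  · linarith
  · have : 0 < 2 * x - 1 := by linarith
    gcongr

theorem Psi_one : Psi 1 = 1 := by
  norm_num [Psi]

theorem one_le_Psi_neg_add_Psi {z : ℝ} (hz : 1 ≤ |z|) : 1 ≤ Psi (-z) + Psi z := by
  have one_le_Psi {x : ℝ} (hx : 1 ≤ x) : 1 ≤ Psi x := Psi_one ▸ monotone_Psi hx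
  rcases le_abs'.mp hz with h | h
  · linarith [one_le_Psi (x := -z) (by linarith), Psi_nonneg z]
  · linarith [one_le_Psi h, Psi_nonneg (-z)]

theorem differentiable_mul_abs : Differentiable ℝ fun y : ℝ => y * |y| := by
  intro y
  rcases eq_or_ne y 0 with rfl | hy
  · refine (Asymptotics.IsBigO.hasFDerivAt (n := 2) ?_ one_lt_two).differentiableAt
    exact Asymptotics.IsBigO.of_bound 1 (by simp [sq])
  · exact differentiableAt_id.mul ((contDiffAt_abs (n := 1) hy).differentiableAt one_ne_zero)

theorem Psi_eq_expNegInvGlue (x : ℝ) :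
    Psi x = exp 1 * expNegInvGlue ((2 * x - 1) * |2 * x - 1|) := by
  unfold Psi expNegInvGlue
  split_ifs with hx hneg hneg
  · simp
  · nlinarith [abs_nonneg (2 * x - 1), abs_of_nonpos (show 2 * x - 1 ≤ 0 by linarith)]
  · nlinarith [abs_of_pos (show 0 < 2 * x - 1 by linarith)]
  · rw [abs_of_pos (by linarith), ← exp_add, one_div, sq]
    ring_nf

theorem differentiable_Psi : Differentiable ℝ Psi := by
  rw [funext Psi_eq_expNegInvGlue]
  exact (differentiable_const _).mul <| (expNegInvGlue.contDiff (n := 1)).differentiable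
    one_ne_zero |>.comp <| differentiable_mul_abs.comp (by fun_prop)

theorem deriv_Psi_nonneg (x : ℝ) : 0 ≤ deriv Psi x := monotone_Psi.deriv_nonneg

theorem integrable_exp_neg_sq_div_two : Integrable fun t : ℝ => exp (-t ^ 2 / 2) := by
  simpa [neg_div, div_eq_inv_mul] using integrable_exp_neg_mul_sq (b := 1 / 2) (by norm_num)

theorem hasDerivAt_Phi (x : ℝ) : HasDerivAt Phi (√(exp 1) * exp (-x ^ 2 / 2)) x := by
  have hsplit (y : ℝ) : Phi y = √(exp 1) *
      ((∫ t in Set.Iic 0, exp (-t ^ 2 / 2)) + ∫ t in (0 : ℝ)..y, exp (-t ^ 2 / 2)) := by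
    rw [Phi, ← intervalIntegral.integral_Iic_sub_Iic integrable_exp_neg_sq_div_two.integrableOn
      integrable_exp_neg_sq_div_two.integrableOn, add_sub_cancel]
  rw [funext hsplit]
  exact (((continuous_exp.comp (by fun_prop)).integral_hasStrictDerivAt 0 x).hasDerivAt.const_add
    _).const_mul _

theorem differentiable_Phi : Differentiable ℝ Phi := fun x => (hasDerivAt_Phi x).differentiableAt

theorem deriv_Phi (x : ℝ) : deriv Phi x = √(exp 1) * exp (-x ^ 2 / 2) := (hasDerivAt_Phi x).deriv

theorem deriv_Phi_neg (x : ℝ) : deriv Phi (-x) = deriv Phi x := by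
  simp [deriv_Phi]

theorem deriv_Phi_pos (x : ℝ) : 0 < deriv Phi x := by
  rw [deriv_Phi]; positivity

theorem one_lt_deriv_Phi {x : ℝ} (hx : |x| < 1) : 1 < deriv Phi x := by
  rw [deriv_Phi, ← exp_half, ← exp_add]
  have : x ^ 2 < 1 := by nlinarith [sq_abs x, abs_nonneg x]
  exact one_lt_exp_iff.mpr (by linarith)

theorem Phi_nonneg (x : ℝ) : 0 ≤ Phi x :=
  mul_nonneg (sqrt_nonneg _) (integral_nonneg fun _ => (exp_pos _).le)

theorem abs_fderiv_apply_le_norm_gradient_mul_norm {F : Type*} [NormedAddCommGroup F]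
    [InnerProductSpace ℝ F] [CompleteSpace F] (f : F → ℝ) (x v : F) :
    |fderiv ℝ f x v| ≤ ‖gradient f x‖ * ‖v‖ := by
  rw [← toDual_gradient, InnerProductSpace.toDual_apply_apply]
  exact abs_real_inner_le_norm _ _

theorem Fin.sum_ite_val_eq {M : Type*} [AddCommMonoid M] {N : ℕ} (f : Fin N → M) {n : ℕ}
    (hn : n < N) : (∑ i : Fin N, if (i : ℕ) = n then f i else 0) = f ⟨n, hn⟩ := by
  rw [Fintype.sum_eq_single ⟨n, hn⟩ fun i hi => if_neg (by simpa [Fin.ext_iff] using hi), if_pos rfl]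

section EuclideanCoord

variable {ι : Type*} [Fintype ι] {w : EuclideanSpace ℝ ι} {g : ℝ → ℝ}

theorem hasFDerivAt_comp_euclideanProj (k : ι) (hg : DifferentiableAt ℝ g (w k)) :
    HasFDerivAt (fun u : EuclideanSpace ℝ ι => g (u k))
      (deriv g (w k) • EuclideanSpace.proj (𝕜 := ℝ) k) w :=
  hg.hasDerivAt.comp_hasFDerivAt w (EuclideanSpace.proj (𝕜 := ℝ) k).hasFDerivAt

theorem hasFDerivAt_comp_neg_euclideanProj (k : ι) (hg : DifferentiableAt ℝ g (-w k)) :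
    HasFDerivAt (fun u : EuclideanSpace ℝ ι => g (-u k))
      (deriv g (-w k) • -EuclideanSpace.proj (𝕜 := ℝ) k) w :=
  hg.hasDerivAt.comp_hasFDerivAt w (EuclideanSpace.proj (𝕜 := ℝ) k).hasFDerivAt.neg

end EuclideanCoord

variable (T : ℕ) (hT : 2 ≤ T) (w : EuclideanSpace ℝ (Fin T ⊕ Fin (T - 1)))

theorem fderiv_fmE_apply (v : EuclideanSpace ℝ (Fin T ⊕ Fin (T - 1))) :
    fderiv ℝ (fmE T hT) w v =
      -Psi 1 * deriv Phi (w (inl ⟨0, by omega⟩)) * v (inl ⟨0, by omega⟩)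
      - ∑ j : Fin (T - 1),
          ((deriv Psi (-w (inr j)) * Phi (-w (inl ⟨j + 1, by omega⟩))
              + deriv Psi (w (inr j)) * Phi (w (inl ⟨j + 1, by omega⟩))) * v (inr j)
            + (Psi (-w (inr j)) * deriv Phi (-w (inl ⟨j + 1, by omega⟩))
              + Psi (w (inr j)) * deriv Phi (w (inl ⟨j + 1, by omega⟩))) * v (inl ⟨j + 1, by omega⟩))
      + 12 * ∑ j : Fin (T - 1),
          (w (inl ⟨j, by omega⟩) - 1 / 2 * w (inr j)) * (v (inl ⟨j, by omega⟩) - 1 / 2 * v (inr j)) := by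
  have hPsi k := hasFDerivAt_comp_euclideanProj (w := w) k (differentiable_Psi _)
  have hPhi k := hasFDerivAt_comp_euclideanProj (w := w) k (differentiable_Phi _)
  have hPsi' k := hasFDerivAt_comp_neg_euclideanProj (w := w) k (differentiable_Psi _)
  have hPhi' k := hasFDerivAt_comp_neg_euclideanProj (w := w) k (differentiable_Phi _)
  have hpr (k : Fin T ⊕ Fin (T - 1)) := (EuclideanSpace.proj (𝕜 := ℝ) k).hasFDerivAt (x := w)
  have h : HasFDerivAt (fmE T hT) _ w :=
    ((hPhi (inl ⟨0, by omega⟩)).const_mul (-Psi 1)).add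
      (HasFDerivAt.fun_sum (u := Finset.univ) fun (j : Fin (T - 1)) _ =>
        ((hPsi' (inr j)).mul (hPhi' (inl ⟨j + 1, by omega⟩))).sub
          ((hPsi (inr j)).mul (hPhi (inl ⟨j + 1, by omega⟩))))
    |>.add ((HasFDerivAt.fun_sum (u := Finset.univ) fun (j : Fin (T - 1)) _ =>
      ((hpr (inl ⟨j, by omega⟩)).sub ((hpr (inr j)).const_mul (1 / 2))).pow 2).const_mul 6)
  rw [h.fderiv]
  simp only [add_apply, sum_apply, sub_apply, smul_apply, neg_apply, PiLp.proj_apply, Pi.sub_apply,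
    smul_eq_mul, Finset.mul_sum]
  rw [sub_eq_add_neg _ (Finset.sum _ _), ← Finset.sum_neg_distrib]
  congr 1
  · congr 1
    · ring
    · exact Finset.sum_congr rfl fun j _ => by ring
  · exact Finset.sum_congr rfl fun j _ => by ring

theorem fderiv_fmE_single_inr (n : Fin (T - 1)) :
    fderiv ℝ (fmE T hT) w (EuclideanSpace.single (inr n) 1) =
      -(deriv Psi (-w (inr n)) * Phi (-w (inl ⟨n + 1, by omega⟩))
        + deriv Psi (w (inr n)) * Phi (w (inl ⟨n + 1, by omega⟩)))
      - 6 * (w (inl ⟨n, by omega⟩) - 1 / 2 * w (inr n)) := by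
  rw [fderiv_fmE_apply]
  simp only [PiLp.single_apply, reduceCtorEq, inr.injEq, mul_ite, mul_one, mul_zero, ite_false,
    add_zero, zero_sub, mul_neg, neg_mul, Finset.sum_neg_distrib, Finset.sum_ite_eq', Finset.mem_univ,
    ite_true]
  ring

theorem fderiv_fmE_single_inl_zero (hn : 0 < T - 1) :
    fderiv ℝ (fmE T hT) w (EuclideanSpace.single (inl ⟨0, by omega⟩) 1) =
      -(Psi 1 * deriv Phi (w (inl ⟨0, by omega⟩)))
      + 12 * (w (inl ⟨0, by omega⟩) - 1 / 2 * w (inr ⟨0, hn⟩)) := by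
  rw [fderiv_fmE_apply]
  simp [Fin.sum_ite_val_eq _ hn]

theorem fderiv_fmE_single_inl_succ {m : ℕ} (hm : m + 1 < T - 1) :
    fderiv ℝ (fmE T hT) w (EuclideanSpace.single (inl ⟨m + 1, by omega⟩) 1) =
      -((Psi (-w (inr ⟨m, by omega⟩)) + Psi (w (inr ⟨m, by omega⟩)))
        * deriv Phi (w (inl ⟨m + 1, by omega⟩)))
      + 12 * (w (inl ⟨m + 1, by omega⟩) - 1 / 2 * w (inr ⟨m + 1, hm⟩)) := by
  rw [fderiv_fmE_apply]
  simp only [PiLp.single_apply, reduceCtorEq, inl.injEq, Fin.mk.injEq, Nat.add_right_cancel_iff,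
    mul_ite, mul_one, mul_zero, ite_false, Fin.sum_ite_val_eq _ hm,
    Fin.sum_ite_val_eq (N := T - 1) _ (n := m) (by omega), deriv_Phi_neg, zero_add, sub_zero, zero_sub]
  ring

theorem fderiv_fmE_single_inr_le (n : Fin (T - 1)) :
    fderiv ℝ (fmE T hT) w (EuclideanSpace.single (inr n) 1) ≤
      -6 * (w (inl ⟨n, by omega⟩) - 1 / 2 * w (inr n)) := by
  have hPsi := deriv_Psi_nonneg (w (inr n))
  have hPsi' := deriv_Psi_nonneg (-w (inr n))
  have hPhi := Phi_nonneg (w (inl ⟨n + 1, by omega⟩))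
  have hPhi' := Phi_nonneg (-w (inl ⟨n + 1, by omega⟩))
  rw [fderiv_fmE_single_inr]
  nlinarith [mul_nonneg hPsi hPhi, mul_nonneg hPsi' hPhi']

theorem fderiv_fmE_single_inl_le (n : Fin (T - 1))
    (hprev : ∀ m : Fin (T - 1), (m : ℕ) + 1 = n → 1 ≤ |w (inr m)|) :
    fderiv ℝ (fmE T hT) w (EuclideanSpace.single (inl ⟨n, by omega⟩) 1) ≤
      -deriv Phi (w (inl ⟨n, by omega⟩)) + 12 * (w (inl ⟨n, by omega⟩) - 1 / 2 * w (inr n)) := by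
  rcases n with ⟨_ | m, hn⟩
  · simp [fderiv_fmE_single_inl_zero T hT w hn, Psi_one]
  · have hc := one_le_Psi_neg_add_Psi (hprev ⟨m, by omega⟩ rfl)
    have hPhi := deriv_Phi_pos (w (inl ⟨m + 1, by omega⟩))
    rw [fderiv_fmE_single_inl_succ T hT w hn]
    nlinarith

theorem third_lt_max_abs_of_le {x z dx dz : ℝ} (hz : |z| < 1) (hdz : dz ≤ -6 * (x - 1 / 2 * z))
    (hdx : dx ≤ -deriv Phi x + 12 * (x - 1 / 2 * z)) : 1 / 3 < max |dx| |dz| := by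
  by_contra! h
  obtain ⟨hdx', -⟩ := abs_le.mp (le_of_max_le_left h)
  obtain ⟨hdz', -⟩ := abs_le.mp (le_of_max_le_right h)
  have hx : |x| < 1 := by
    have := deriv_Phi_pos x
    rw [abs_lt] at hz ⊢
    constructor <;> linarith
  linarith [one_lt_deriv_Phi hx]

end

/-- if some `|z_i| < 1` then the Euclidean norm of the full gradient of
`f̄_m` exceeds `1/3`. -/
theorem stmt_8 (T : ℕ) (hT : 2 ≤ T)
    (w : EuclideanSpace ℝ (Fin T ⊕ Fin (T - 1)))
    (j : Fin (T - 1)) (hj : |w (Sum.inr j)| < 1) :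
    1 / 3 < ‖gradient (fmE T hT) w‖ := by
  obtain ⟨n, hn, hmin⟩ :=
    wellFounded_lt.has_min {i : Fin (T - 1) | |w (Sum.inr i)| < 1} ⟨j, hj⟩
  have hprev (m : Fin (T - 1)) (hm : (m : ℕ) + 1 = n) : 1 ≤ |w (Sum.inr m)| :=
    not_lt.mp fun h => hmin m h (Fin.lt_def.mpr (by omega))
  have hpartial k : |fderiv ℝ (fmE T hT) w (EuclideanSpace.single k 1)| ≤
      ‖gradient (fmE T hT) w‖ := by
    simpa using abs_fderiv_apply_le_norm_gradient_mul_norm (fmE T hT) w (EuclideanSpace.single k 1)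
  exact (third_lt_max_abs_of_le hn (fderiv_fmE_single_inr_le T hT w n)
    (fderiv_fmE_single_inl_le T hT w n hprev)).trans_le (max_le (hpartial _) (hpartial _))
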